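/- arXiv:2007.06036 — 2 statements merged into one kernel-verified Lean document; each statement's English description precedes it below -/
import Mathlib

section
/- Let V = V_1 ⊕ V_2 ⊕ V_3 be a finite-dimensional complex vector space graded in weights k_1 > k_2 > k_3 (with projectors Π_j), Y = k_1Π_1 + k_2Π_2 + k_3Π_3, and let σ be an antilinear involution of V. Let δ = δ_1 + δ_2 + δ_3 with δ_1 = Π_2δΠ_1, δ_2 = Π_3δΠ_2, δ_3 = Π_3δΠ_1, and suppose σYσ = exp(-2i·ad(δ))(Y). Let e ∈ V_1 with σ(e) = e + a_2 + a_3 where a_j ∈ V_j. Then δ_1(e) = (i/2)a_2 and δ_3(e) = -(1/2)·(a_3 - σ(a_3))/(2i); equivalently Π_3(e - σ(e))/2 has imaginary part (with respect to σ) equal to -δ_3(e). -/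
/-- `ad(x) = [x, ·]` as a continuous linear endomorphism of a normed algebra. -/
noncomputable def adC {A : Type*} [NormedRing A] [NormedAlgebra ℂ A] (x : A) : A →L[ℂ] A :=
  ContinuousLinearMap.mul ℂ A x - (ContinuousLinearMap.mul ℂ A).flip x

set_option synthInstance.maxHeartbeats 1000000

set_option maxHeartbeats 1000000 in
/-- The key height formula for a generalized biextension: with `V = V₁ ⊕ V₂ ⊕ V₃`
graded in weights `k₁ > k₂ > k₃` (projectors `P₁, P₂, P₃`),
`Y = k₁P₁ + k₂P₂ + k₃P₃`, `δ = P₂δP₁ + P₃δP₂ + P₃δP₁`, an antilinear involution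
`σ` with `σYσ = exp(-2i·ad δ)(Y)`, and `e ∈ V₁` with `σ(e) = e + a₂ + a₃`
(`aⱼ ∈ Vⱼ`), one has `δ₁(e) = (i/2)a₂` and `δ₃(e) = -(1/2)·(a₃ - σ(a₃))/(2i)`. -/
theorem biextension_height_formula
    (V : Type*) [NormedAddCommGroup V] [NormedSpace ℂ V] [FiniteDimensional ℂ V]
    (P1 P2 P3 : V →L[ℂ] V)
    (hsum : P1 + P2 + P3 = 1)
    (h11 : P1 * P1 = P1) (h22 : P2 * P2 = P2) (h33 : P3 * P3 = P3)
    (h12 : P1 * P2 = 0) (h21 : P2 * P1 = 0) (h13 : P1 * P3 = 0)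
    (h31 : P3 * P1 = 0) (h23 : P2 * P3 = 0) (h32 : P3 * P2 = 0)
    (k1 k2 k3 : ℤ) (hk12 : k2 < k1) (hk23 : k3 < k2)
    (σ : V →L⋆[ℂ] V) (hσ : ∀ v, σ (σ v) = v)
    (δ : V →L[ℂ] V)
    (hδ : δ = P2 * δ * P1 + P3 * δ * P2 + P3 * δ * P1)
    (Y : V →L[ℂ] V)
    (hY : Y = (k1 : ℂ) • P1 + (k2 : ℂ) • P2 + (k3 : ℂ) • P3)
    (hconj : ∀ v, σ (Y (σ v)) = (NormedSpace.exp ((-(2 * Complex.I)) • adC δ) Y) v)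
    (e a2 a3 : V) (he : P1 e = e) (ha2 : P2 a2 = a2) (ha3 : P3 a3 = a3)
    (hse : σ e = e + a2 + a3) :
    (P2 * δ * P1) e = (Complex.I / 2) • a2 ∧
    (P3 * δ * P1) e = (-(1 / 2 : ℂ)) • ((1 / (2 * Complex.I)) • (a3 - σ a3)) := by
  -- associativity-normalized projector relations
  have e11 : ∀ f : V →L[ℂ] V, P1 * (P1 * f) = P1 * f := fun f => by rw [← mul_assoc, h11]
  have e22 : ∀ f : V →L[ℂ] V, P2 * (P2 * f) = P2 * f := fun f => by rw [← mul_assoc, h22]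
  have e33 : ∀ f : V →L[ℂ] V, P3 * (P3 * f) = P3 * f := fun f => by rw [← mul_assoc, h33]
  have e12 : ∀ f : V →L[ℂ] V, P1 * (P2 * f) = 0 := fun f => by rw [← mul_assoc, h12, zero_mul]
  have e21 : ∀ f : V →L[ℂ] V, P2 * (P1 * f) = 0 := fun f => by rw [← mul_assoc, h21, zero_mul]
  have e13 : ∀ f : V →L[ℂ] V, P1 * (P3 * f) = 0 := fun f => by rw [← mul_assoc, h13, zero_mul]
  have e31 : ∀ f : V →L[ℂ] V, P3 * (P1 * f) = 0 := fun f => by rw [← mul_assoc, h31, zero_mul]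
  have e23 : ∀ f : V →L[ℂ] V, P2 * (P3 * f) = 0 := fun f => by rw [← mul_assoc, h23, zero_mul]
  have e32 : ∀ f : V →L[ℂ] V, P3 * (P2 * f) = 0 := fun f => by rw [← mul_assoc, h32, zero_mul]
  obtain ⟨N, hNdef⟩ : ∃ N' : V →L[ℂ] V, N' = ((k1:ℂ)-k2) • (P2*δ*P1)
      + ((k2:ℂ)-k3) • (P3*δ*P2) + ((k1:ℂ)-k3) • (P3*δ*P1) := ⟨_, rfl⟩
  obtain ⟨M, hMdef⟩ : ∃ M' : V →L[ℂ] V,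
      M' = ((k1:ℂ)-2*k2+k3) • ((P3*δ*P2) * (P2*δ*P1)) := ⟨_, rfl⟩
  have adY : adC δ Y = N := by
    have had : adC δ Y = δ * Y - Y * δ := rfl
    rw [had, hNdef]
    conv_lhs => rw [hδ, hY]
    simp only [add_mul, mul_add, smul_mul_assoc, mul_smul_comm, mul_assoc]
    simp only [e11, e12, e13, e21, e22, e23, e31, e32, e33, h11, h12, h13, h21, h22, h23, h31,
      h32, h33, mul_zero, zero_mul, smul_zero]
    module
  have adN : adC δ N = M := by
    have had : adC δ N = δ * N - N * δ := rfl
    rw [had, hNdef, hMdef]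
    conv_lhs => rw [hδ]
    simp only [add_mul, mul_add, smul_mul_assoc, mul_smul_comm, mul_assoc]
    simp only [e11, e12, e13, e21, e22, e23, e31, e32, e33, h11, h12, h13, h21, h22, h23, h31,
      h32, h33, mul_zero, zero_mul, smul_zero]
    module
  have adM : adC δ M = 0 := by
    have had : adC δ M = δ * M - M * δ := rfl
    rw [had, hMdef]
    conv_lhs => rw [hδ]
    simp only [add_mul, mul_add, smul_mul_assoc, mul_smul_comm, mul_assoc]
    simp only [e11, e12, e13, e21, e22, e23, e31, e32, e33, h11, h12, h13, h21, h22, h23, h31,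
      h32, h33, mul_zero, zero_mul, smul_zero]
    module
  -- the exponential collapses to a quadratic polynomial on Y
  have hpow2 : ((adC δ)^2) Y = M := by
    rw [pow_two, ContinuousLinearMap.mul_apply, adY, adN]
  have hpow3 : ∀ n : ℕ, ((adC δ)^(n+3)) Y = 0 := by
    intro n
    have h3 : ((adC δ)^3) Y = 0 := by
      rw [pow_succ, ContinuousLinearMap.mul_apply, adY, pow_two,
        ContinuousLinearMap.mul_apply, adN, adM]
    rw [pow_add, ContinuousLinearMap.mul_apply, h3, map_zero]
  have hexpY : (NormedSpace.exp ((-(2 * Complex.I)) • adC δ)) Y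
      = Y + (-(2 * Complex.I)) • N + (-2:ℂ) • M := by
    set T := (-(2 * Complex.I)) • adC δ with hT
    have hs : Summable fun n : ℕ => ((n.factorial:ℂ))⁻¹ • T^n :=
      NormedSpace.expSeries_summable' (𝕂 := ℂ) T
    have happ : (NormedSpace.exp T) Y = ∑' n : ℕ, ((n.factorial:ℂ))⁻¹ • ((T ^ n) Y) := by
      rw [NormedSpace.exp_eq_tsum (𝕂 := ℂ)]
      have h2 := ContinuousLinearMap.map_tsum (ContinuousLinearMap.apply ℂ (V →L[ℂ] V) Y) hs
      simpa using h2
    rw [happ]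
    have hTn : ∀ n : ℕ, (T ^ n) Y = (-(2 * Complex.I))^n • (((adC δ)^n) Y) := by
      intro n; rw [hT, smul_pow, ContinuousLinearMap.smul_apply]
    rw [tsum_eq_sum (s := Finset.range 3) (by
      intro n hn
      rw [Finset.mem_range, not_lt] at hn
      obtain ⟨m, rfl⟩ := Nat.exists_eq_add_of_le hn
      rw [hTn, add_comm 3 m, hpow3, smul_zero, smul_zero])]
    rw [Finset.sum_range_succ, Finset.sum_range_succ, Finset.sum_range_one]
    have hT1 : T Y = -(2*Complex.I) • N := by
      rw [hT, ContinuousLinearMap.smul_apply, adY]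
    simp only [hTn, pow_zero, pow_one, hT1, ContinuousLinearMap.one_apply, hpow2, adY,
      Nat.factorial_zero, Nat.factorial_one, Nat.cast_one, inv_one, one_smul]
    have hIM : (Complex.I*Complex.I) • M = (-1:ℂ) • M := by rw [Complex.I_mul_I]
    have hfac2 : ((Nat.factorial 2 : ℂ))⁻¹ = (2:ℂ)⁻¹ := by norm_num [Nat.factorial]
    rw [hfac2]
    linear_combination (norm := module) (2:ℂ) • hIM
  -- pointwise projector facts
  have p12 : ∀ v, P1 (P2 v) = 0 := fun v => by
    simpa [ContinuousLinearMap.mul_apply] using DFunLike.congr_fun h12 v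
  have p13 : ∀ v, P1 (P3 v) = 0 := fun v => by
    simpa [ContinuousLinearMap.mul_apply] using DFunLike.congr_fun h13 v
  have p21 : ∀ v, P2 (P1 v) = 0 := fun v => by
    simpa [ContinuousLinearMap.mul_apply] using DFunLike.congr_fun h21 v
  have p23 : ∀ v, P2 (P3 v) = 0 := fun v => by
    simpa [ContinuousLinearMap.mul_apply] using DFunLike.congr_fun h23 v
  have p31 : ∀ v, P3 (P1 v) = 0 := fun v => by
    simpa [ContinuousLinearMap.mul_apply] using DFunLike.congr_fun h31 v
  have p32 : ∀ v, P3 (P2 v) = 0 := fun v => by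
    simpa [ContinuousLinearMap.mul_apply] using DFunLike.congr_fun h32 v
  have p22 : ∀ v, P2 (P2 v) = P2 v := fun v => by
    simpa [ContinuousLinearMap.mul_apply] using DFunLike.congr_fun h22 v
  have p33 : ∀ v, P3 (P3 v) = P3 v := fun v => by
    simpa [ContinuousLinearMap.mul_apply] using DFunLike.congr_fun h33 v
  have hP2e : P2 e = 0 := by rw [← he]; exact p21 e
  have hP3e : P3 e = 0 := by rw [← he]; exact p31 e
  have hP1a2 : P1 a2 = 0 := by rw [← ha2]; exact p12 a2
  have hP3a2 : P3 a2 = 0 := by rw [← ha2]; exact p32 a2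
  have hP1a3 : P1 a3 = 0 := by rw [← ha3]; exact p13 a3
  have hP2a3 : P2 a3 = 0 := by rw [← ha3]; exact p23 a3
  -- Y values
  have hYe : Y e = (k1:ℂ) • e := by
    rw [hY]
    simp [ContinuousLinearMap.add_apply, ContinuousLinearMap.smul_apply, he, hP2e, hP3e]
  have hYa2 : Y a2 = (k2:ℂ) • a2 := by
    rw [hY]
    simp [ContinuousLinearMap.add_apply, ContinuousLinearMap.smul_apply, ha2, hP1a2, hP3a2]
  have hYa3 : Y a3 = (k3:ℂ) • a3 := by
    rw [hY]
    simp [ContinuousLinearMap.add_apply, ContinuousLinearMap.smul_apply, ha3, hP1a3, hP2a3]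
  -- atoms
  obtain ⟨u1, hu1d⟩ : ∃ u, u = P2 (δ e) := ⟨_, rfl⟩
  obtain ⟨u3, hu3d⟩ : ∃ u, u = P3 (δ e) := ⟨_, rfl⟩
  obtain ⟨w, hwd⟩ : ∃ u, u = P3 (δ a2) := ⟨_, rfl⟩
  have hu1P : P2 u1 = u1 := by rw [hu1d]; exact p22 _
  -- values of N and M
  have hNe : N e = ((k1:ℂ)-k2) • u1 + ((k1:ℂ)-k3) • u3 := by
    rw [hNdef, hu1d, hu3d]
    simp [ContinuousLinearMap.add_apply, ContinuousLinearMap.smul_apply,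
      ContinuousLinearMap.mul_apply, he, hP2e]
  have hNa2 : N a2 = ((k2:ℂ)-k3) • w := by
    rw [hNdef, hwd]
    simp [ContinuousLinearMap.add_apply, ContinuousLinearMap.smul_apply,
      ContinuousLinearMap.mul_apply, ha2, hP1a2]
  have hNa3 : N a3 = 0 := by
    rw [hNdef]
    simp [ContinuousLinearMap.add_apply, ContinuousLinearMap.smul_apply,
      ContinuousLinearMap.mul_apply, hP1a3, hP2a3]
  have hMe : M e = ((k1:ℂ)-2*k2+k3) • (P3 (δ u1)) := by
    rw [hMdef, hu1d]
    simp [ContinuousLinearMap.smul_apply, ContinuousLinearMap.mul_apply, he, p22]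
  have hMa2 : M a2 = 0 := by
    rw [hMdef]
    simp [ContinuousLinearMap.smul_apply, ContinuousLinearMap.mul_apply, hP1a2]
  have hMa3 : M a3 = 0 := by
    rw [hMdef]
    simp [ContinuousLinearMap.smul_apply, ContinuousLinearMap.mul_apply, hP1a3]
  -- sigma and scalars
  have hσint : ∀ (k : ℤ) (v : V), σ ((k:ℂ) • v) = (k:ℂ) • σ v := fun k v => by
    rw [map_smulₛₗ]; norm_num
  have key : ∀ v, σ (Y (σ v)) = Y v + (-(2 * Complex.I)) • N v + (-2:ℂ) • M v := fun v => by
    rw [hconj v, hexpY]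
    simp [ContinuousLinearMap.add_apply, ContinuousLinearMap.smul_apply]
  -- nonvanishing scalars
  have hk12' : ((k1:ℂ) - k2) ≠ 0 := sub_ne_zero.mpr (by exact_mod_cast hk12.ne')
  have hk13' : ((k1:ℂ) - k3) ≠ 0 := sub_ne_zero.mpr (by exact_mod_cast (hk23.trans hk12).ne')
  have hk23' : ((k2:ℂ) - k3) ≠ 0 := sub_ne_zero.mpr (by exact_mod_cast hk23.ne')
  have hIa2 : (Complex.I * Complex.I) • a2 = (-1:ℂ) • a2 := by rw [Complex.I_mul_I]
  have hIa3 : (Complex.I * Complex.I) • a3 = (-1:ℂ) • a3 := by rw [Complex.I_mul_I]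
  have hIw : (Complex.I * Complex.I) • w = (-1:ℂ) • w := by rw [Complex.I_mul_I]
  -- Equation A : hconj at σ e
  have eqA : (k1:ℂ) • (e + a2 + a3) =
      ((k1:ℂ) • e + (k2:ℂ) • a2 + (k3:ℂ) • a3)
      + (-(2 * Complex.I)) • ((((k1:ℂ)-k2) • u1 + ((k1:ℂ)-k3) • u3) + ((k2:ℂ)-k3) • w)
      + (-2:ℂ) • (((k1:ℂ)-2*k2+k3) • (P3 (δ u1))) := by
    have h := key (σ e)
    rw [hσ e, hYe, hσint k1 e, hse] at h
    simp only [map_add] at h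
    rw [hYe, hYa2, hYa3, hNe, hNa2, hNa3, hMe, hMa2, hMa3] at h
    linear_combination (norm := module) h
  have eqA2 : (k1:ℂ) • a2 = (k2:ℂ) • a2 + (-(2 * Complex.I)) • (((k1:ℂ)-k2) • u1) := by
    have h := congrArg P2 eqA
    simp only [map_add, map_smul] at h
    rw [hP2e, hP2a3, ha2, hu1P,
      show P2 u3 = 0 from by rw [hu3d]; exact p23 _,
      show P2 w = 0 from by rw [hwd]; exact p23 _,
      show P2 (P3 (δ u1)) = 0 from p23 _] at h
    linear_combination (norm := module) h
  have hu1 : u1 = (Complex.I / 2) • a2 := by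
    have hc : ((-(2 * Complex.I)) * ((k1:ℂ) - k2)) ≠ 0 :=
      mul_ne_zero (by simp [Complex.I_ne_zero]) hk12'
    apply smul_right_injective V hc
    show ((-(2 * Complex.I)) * ((k1:ℂ) - k2)) • u1
        = ((-(2 * Complex.I)) * ((k1:ℂ) - k2)) • ((Complex.I / 2) • a2)
    linear_combination (norm := module) (-1:ℂ) • eqA2 + ((k1:ℂ)-k2) • hIa2
  have hzw : P3 (δ u1) = (Complex.I / 2) • w := by
    rw [hu1, map_smul, map_smul, ← hwd]
  have eqA3 : (k1:ℂ) • a3 = (k3:ℂ) • a3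
      + (-(2 * Complex.I)) • (((k1:ℂ)-k3) • u3 + ((k2:ℂ)-k3) • w)
      + (-2:ℂ) • (((k1:ℂ)-2*k2+k3) • ((Complex.I/2) • w)) := by
    have h := congrArg P3 eqA
    simp only [map_add, map_smul] at h
    rw [hP3e, hP3a2, ha3,
      show P3 u1 = 0 from by rw [hu1d]; exact p32 _,
      show P3 u3 = u3 from by rw [hu3d]; exact p33 _,
      show P3 w = w from by rw [hwd]; exact p33 _,
      show P3 (P3 (δ u1)) = P3 (δ u1) from p33 _, hzw] at h
    linear_combination (norm := module) h
  have hu3 : u3 = (Complex.I / 2) • a3 - (1/2:ℂ) • w := by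
    have hc : ((-(2 * Complex.I)) * ((k1:ℂ) - k3)) ≠ 0 :=
      mul_ne_zero (by simp [Complex.I_ne_zero]) hk13'
    apply smul_right_injective V hc
    show ((-(2 * Complex.I)) * ((k1:ℂ) - k3)) • u3
        = ((-(2 * Complex.I)) * ((k1:ℂ) - k3)) • ((Complex.I / 2) • a3 - (1/2:ℂ) • w)
    linear_combination (norm := module) (-1:ℂ) • eqA3 + ((k1:ℂ)-k3) • hIa3
  -- the involution relation
  have hxy : σ a2 + σ a3 = -a2 - a3 := by
    have h := hσ e
    rw [hse] at h
    simp only [map_add] at h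
    rw [hse] at h
    linear_combination (norm := module) h
  -- Equation B : hconj at e
  have eqB : (k1:ℂ) • (e + a2 + a3) + (k2:ℂ) • σ a2 + (k3:ℂ) • σ a3 =
      (k1:ℂ) • e
      + (-(2 * Complex.I)) • (((k1:ℂ)-k2) • ((Complex.I/2) • a2)
          + ((k1:ℂ)-k3) • ((Complex.I/2) • a3 - (1/2:ℂ) • w))
      + (-2:ℂ) • (((k1:ℂ)-2*k2+k3) • ((Complex.I/2) • w)) := by
    have h := key e
    rw [hse] at h
    simp only [map_add] at h
    rw [hYe, hYa2, hYa3, hσint k1 e, hσint k2 a2, hσint k3 a3, hse] at h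
    rw [hNe, hMe, hzw, hu1, hu3] at h
    linear_combination (norm := module) h
  have hx : σ a2 = -a2 + (2 * Complex.I) • w := by
    apply smul_right_injective V hk23'
    show ((k2:ℂ) - k3) • σ a2 = ((k2:ℂ) - k3) • (-a2 + (2 * Complex.I) • w)
    linear_combination (norm := module) eqB + (-(k3:ℂ)) • hxy
      + ((k2:ℂ)-k1) • hIa2 + ((k3:ℂ)-k1) • hIa3
  have hy2 : σ a3 = -a3 - (2 * Complex.I) • w := by
    linear_combination (norm := module) hxy - hx
  have hhalf : (1:ℂ) / (2 * Complex.I) = -(Complex.I/2) := by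
    have h2I : (2 * Complex.I) ≠ 0 := by simp [Complex.I_ne_zero]
    rw [div_eq_iff h2I]
    linear_combination Complex.I_sq
  constructor
  · show P2 (δ (P1 e)) = (Complex.I / 2) • a2
    rw [he, ← hu1d]
    exact hu1
  · show P3 (δ (P1 e)) = (-(1 / 2 : ℂ)) • ((1 / (2 * Complex.I)) • (a3 - σ a3))
    rw [he, ← hu3d, hy2, hu3, hhalf]
    linear_combination (norm := module) (-(1/2):ℂ) • hIw
end

section
/- For all t ∈ ℂ with t ∉ {-2, -1, 0, 1}: 2·D₂(t) + D₂(1 - t²) = -2·D₂(-t), where D₂ is the Bloch–Wigner dilogarithm. -/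
open Complex

/-- The principal dilogarithm, `Li₂(z) = -∫₀¹ log(1 - z t) / t dt`, which agrees
with `∑_{n ≥ 1} zⁿ/n²` for `|z| ≤ 1` and with the principal analytic
continuation on `ℂ \ [1, ∞)`. -/
noncomputable def Li2 (z : ℂ) : ℂ :=
  -∫ t in (0:ℝ)..(1:ℝ), Complex.log (1 - z * (t : ℂ)) / (t : ℂ)

/-- The Bloch–Wigner dilogarithm `D₂(z) = Im(Li₂(z)) + arg(1-z)·log|z|`. -/
noncomputable def D2 (z : ℂ) : ℝ :=
  (Li2 z).im + (1 - z).arg * Real.log ‖z‖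

open MeasureTheory intervalIntegral Set


lemma intervalIntegrable_log01 : IntervalIntegrable Real.log volume 0 1 := by
  have hcont : ContinuousOn (fun x : ℝ => x - x * Real.log x) (Icc 0 1) :=
    (continuous_id.sub Real.continuous_mul_log).continuousOn
  have hderiv : ∀ x ∈ Ioo (0:ℝ) 1, HasDerivAt (fun x : ℝ => x - x * Real.log x)
      (-Real.log x) x := by
    intro x hx
    have h := (hasDerivAt_id' x).sub (Real.hasDerivAt_mul_log (ne_of_gt hx.1))
    exact h.congr_deriv (by ring)
  have hpos : ∀ x ∈ Ioo (0:ℝ) 1, 0 ≤ -Real.log x := fun x hx => by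
    simpa using Real.log_nonpos hx.1.le hx.2.le
  have h := integrableOn_deriv_of_nonneg hcont hderiv hpos
  have h2 : IntegrableOn (fun x => -Real.log x) (Set.uIoc (0:ℝ) 1) volume := by
    rw [uIoc_of_le zero_le_one]
    exact h
  have h3 := (intervalIntegrable_iff.2 h2).neg
  have : Real.log = -fun x : ℝ => -Real.log x := by funext x; simp
  rw [this]; exact h3

lemma intervalIntegrable_log_any (a b : ℝ) : IntervalIntegrable Real.log volume a b := by
  have key : ∀ c : ℝ, 0 ≤ c → IntervalIntegrable Real.log volume 0 c := by
    intro c hc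
    rcases le_total c 1 with h | h
    · exact intervalIntegrable_log01.mono_set (by rw [uIcc_of_le hc, uIcc_of_le zero_le_one]; exact Icc_subset_Icc le_rfl h)
    · refine intervalIntegrable_log01.trans ?_
      refine IntervalIntegrable.log continuousOn_id fun x hx => ?_
      rw [uIcc_of_le h] at hx
      exact ne_of_gt (lt_of_lt_of_le one_pos hx.1)
  have key' : ∀ c : ℝ, IntervalIntegrable Real.log volume 0 c := by
    intro c
    rcases le_total 0 c with h | h
    · exact key c h
    · have h1 := key (-c) (by linarith)
      have h2 := (IntervalIntegrable.iff_comp_neg (f := Real.log) (by simp)).mp h1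
      simp only [Real.log_neg_eq_log] at h2
      simpa using h2
  exact (key' a).symm.trans (key' b)

lemma li2_meas (z : ℂ) (S : Set ℝ) :
    AEStronglyMeasurable (fun t : ℝ => Complex.log (1 - z * t) / t) (volume.restrict S) := by
  apply Measurable.aestronglyMeasurable
  exact (Complex.measurable_log.comp (by fun_prop)).div (by fun_prop)

lemma li2_integrable (z : ℂ) : IntervalIntegrable
    (fun t : ℝ => Complex.log (1 - z * t) / t) volume 0 1 := by
  set M : ℝ := ‖z‖ + 1 with hM
  have hM1 : 1 ≤ M := le_add_of_nonneg_left (norm_nonneg z)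
  set δ : ℝ := (2 * M)⁻¹ with hδ
  have hδ0 : 0 < δ := by positivity
  have hδh : δ ≤ 1 / 2 := by
    rw [hδ]
    rw [inv_le_comm₀ (by positivity) (by norm_num)]
    calc (1/2 : ℝ)⁻¹ = 2 := by norm_num
    _ ≤ 2 * M := by nlinarith
  have hδ1 : δ ≤ 1 := hδh.trans (by norm_num)
  have partA : IntervalIntegrable (fun t : ℝ => Complex.log (1 - z * t) / t) volume 0 δ := by
    refine IntervalIntegrable.mono_fun (f := fun _ : ℝ => ((3/2) * M : ℝ))
      (intervalIntegrable_const) (li2_meas z _) ?_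
    rw [Filter.EventuallyLE, ae_restrict_iff' measurableSet_uIoc]
    refine ae_of_all _ fun t ht => ?_
    rw [uIoc_of_le hδ0.le] at ht
    have ht0 : 0 < t := ht.1
    have hzt : ‖-(z * (t : ℂ))‖ ≤ 1 / 2 := by
      rw [norm_neg]
      calc ‖z * (t:ℂ)‖ = ‖z‖ * |t| := by
            rw [norm_mul, Complex.norm_real]; rfl
      _ ≤ M * δ := by
            apply mul_le_mul (by simp [hM]) (by rw [abs_of_pos ht0]; exact ht.2) (abs_nonneg t)
              (by linarith)
      _ ≤ 1/2 := by
            rw [hδ]; rw [mul_inv_le_iff₀ (by positivity)]; nlinarith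
    have key := Complex.norm_log_one_add_half_le_self hzt
    have h1 : (1 : ℂ) - z * t = 1 + -(z * t) := by ring
    calc ‖Complex.log (1 - z * t) / (t:ℂ)‖ = ‖Complex.log (1 + -(z * t))‖ / t := by
          rw [norm_div, Complex.norm_real, Real.norm_eq_abs, abs_of_pos ht0, h1]
    _ ≤ (3/2) * ‖-(z * (t:ℂ))‖ / t := by gcongr
    _ = (3/2) * (‖z‖) := by
          rw [norm_neg, norm_mul, Complex.norm_real, Real.norm_eq_abs, abs_of_pos ht0]
          field_simp
    _ ≤ ‖((3/2) * M : ℝ)‖ := by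
          rw [Real.norm_eq_abs, _root_.abs_of_nonneg (by positivity : (0:ℝ) ≤ 3/2*M)]
          nlinarith
  have hlog : IntervalIntegrable (fun t : ℝ => Real.log (‖1 - z * t‖)) volume δ 1 := by
    by_cases hc : z.im = 0 ∧ 1 ≤ z.re
    · -- z real ≥ 1
      obtain ⟨him, hre⟩ := hc
      set x := z.re with hx
      have hzx : z = (x : ℂ) := Complex.ext rfl (by simp [him])
      have hx0 : x ≠ 0 := by intro h; rw [h] at hre; norm_num at hre
      have h1 : IntervalIntegrable (fun s : ℝ => Real.log (1 - s)) volume (δ * x) x := by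
        have := (intervalIntegrable_log_any (1 - δ * x) (1 - x)).comp_sub_left 1
        simpa using this
      have h2 := h1.comp_mul_left (c := x)
      have e1 : x * (δ / x) = δ := by field_simp
      have e2 : x / x = 1 := div_self hx0
      rw [mul_comm δ x, mul_div_assoc] at h2
      rw [e1] at h2
      rw [e2] at h2
      apply h2.congr
      intro t _
      show Real.log (1 - x * t) = Real.log (‖1 - z * t‖)
      rw [hzx]
      have h3 : (1 : ℂ) - (x:ℂ) * t = ((1 - x * t : ℝ) : ℂ) := by push_cast; ring
      rw [h3, Complex.norm_real, Real.norm_eq_abs, Real.log_abs]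
    · -- 1 - z t never vanishes on [δ, 1]
      push_neg at hc
      apply IntervalIntegrable.log
      · exact (continuous_norm.comp (by fun_prop)).continuousOn
      · intro t ht
        rw [uIcc_of_le (by linarith)] at ht
        have ht0 : 0 < t := lt_of_lt_of_le hδ0 ht.1
        intro habs
        have hz0 : (1 : ℂ) - z * t = 0 := by
          simpa using (norm_eq_zero.mp habs)
        have htne : (t : ℂ) ≠ 0 := by exact_mod_cast ne_of_gt ht0
        have hzt1 : z * (t:ℂ) = 1 := by rw [sub_eq_zero] at hz0; exact hz0.symm
        have hzval : z = (t : ℂ)⁻¹ := by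
          field_simp
          exact hzt1
        have him : z.im = 0 := by rw [hzval, ← Complex.ofReal_inv]; exact Complex.ofReal_im _
        have hre : z.re = t⁻¹ := by rw [hzval, ← Complex.ofReal_inv]; exact Complex.ofReal_re _
        have hlt := hc him
        rw [hre] at hlt
        have h5 : t * t⁻¹ = 1 := mul_inv_cancel₀ (ne_of_gt ht0)
        have h6 : (1:ℝ) < t := by
          calc (1:ℝ) = t * t⁻¹ := h5.symm
          _ < t * 1 := by exact mul_lt_mul_of_pos_left hlt ht0
          _ = t := mul_one t
        linarith [ht.2]
  have partB : IntervalIntegrable (fun t : ℝ => Complex.log (1 - z * t) / t) volume δ 1 := by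
    refine IntervalIntegrable.mono_fun'
      (g := fun t : ℝ => (|Real.log (‖1 - z * t‖)| + Real.pi) / δ)
      ((hlog.abs.add intervalIntegrable_const).div_const δ) (li2_meas z _) ?_
    rw [Filter.EventuallyLE, ae_restrict_iff' measurableSet_uIoc]
    refine ae_of_all _ fun t ht => ?_
    rw [uIoc_of_le (by linarith : δ ≤ 1)] at ht
    have ht0 : 0 < t := lt_of_lt_of_le hδ0 (le_of_lt ht.1)
    set w : ℂ := 1 - z * t with hw
    calc ‖Complex.log w / (t:ℂ)‖ = ‖Complex.log w‖ / t := by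
          rw [norm_div, Complex.norm_real, Real.norm_eq_abs, abs_of_pos ht0]
    _ ≤ ‖Complex.log w‖ / δ := by gcongr; exact le_of_lt ht.1
    _ ≤ (|Real.log (‖w‖)| + Real.pi) / δ := by
          gcongr
          calc ‖Complex.log w‖ ≤ |(Complex.log w).re| + |(Complex.log w).im| :=
                Complex.norm_le_abs_re_add_abs_im _
          _ ≤ |Real.log (‖w‖)| + Real.pi := by
                rw [Complex.log_re, Complex.log_im]
                exact add_le_add le_rfl (Complex.abs_arg_le_pi w)
  exact partA.trans partB

lemma slit_aux {z : ℂ} (hQ : z.im ≠ 0 ∨ z.re < 1) {t : ℝ} (ht : t ∈ Set.Icc (0:ℝ) 1) :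
    (1 - z * t) ∈ Complex.slitPlane := by
  rcases eq_or_lt_of_le ht.1 with h0 | h0
  · rw [← h0]; simp [Complex.mem_slitPlane_iff]
  by_cases him : z.im = 0
  · rcases hQ with h | hre
    · exact absurd him h
    · rw [Complex.mem_slitPlane_iff]
      left
      simp only [Complex.sub_re, Complex.one_re, Complex.mul_re, Complex.ofReal_re,
        Complex.ofReal_im, him]
      have : z.re * t < 1 := by nlinarith [ht.2]
      simpa using by linarith
  · rw [Complex.mem_slitPlane_iff]
    right
    simp only [Complex.sub_im, Complex.one_im, Complex.mul_im, Complex.ofReal_re,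
      Complex.ofReal_im, him]
    intro h
    apply him
    have : z.im * t = 0 := by linarith [h]
    rcases mul_eq_zero.mp this with h' | h'
    · exact h'
    · exact absurd h' (ne_of_gt h0)

lemma slit_ne {z : ℂ} (hQ : z.im ≠ 0 ∨ z.re < 1) {t : ℝ} (ht : t ∈ Set.Icc (0:ℝ) 1) :
    (1 - z * t) ≠ 0 := Complex.slitPlane_ne_zero (slit_aux hQ ht)

lemma li2_hasDerivAt {z₀ : ℂ} (hQ : z₀.im ≠ 0 ∨ z₀.re < 1) :
    HasDerivAt Li2 (∫ t in (0:ℝ)..1, (1 - z₀ * t)⁻¹) z₀ := by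
  -- minimum of |1 - z₀ t| on [0,1]
  obtain ⟨t₀, ht₀, hmin⟩ : ∃ t₀ ∈ Icc (0:ℝ) 1, ∀ t ∈ Icc (0:ℝ) 1,
      ‖1 - z₀ * t₀‖ ≤ ‖1 - z₀ * t‖ := by
    obtain ⟨t₀, ht₀, hmin⟩ := (isCompact_Icc (a := (0:ℝ)) (b := 1)).exists_isMinOn
      (nonempty_Icc.mpr zero_le_one)
      ((continuous_norm.comp (by fun_prop : Continuous fun t : ℝ => 1 - z₀ * t))).continuousOn
    exact ⟨t₀, ht₀, fun t ht => hmin ht⟩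
  set d : ℝ := ‖1 - z₀ * t₀‖ with hd
  have hd0 : 0 < d := by
    rw [hd]
    exact norm_pos_iff.mpr (slit_ne hQ ht₀)
  -- ball radius keeping Q
  obtain ⟨e₀, he₀, heQ⟩ : ∃ e₀ > 0, ∀ z : ℂ, dist z z₀ < e₀ → (z.im ≠ 0 ∨ z.re < 1) := by
    by_cases him : z₀.im = 0
    · rcases hQ with h | hre
      · exact absurd him h
      · refine ⟨1 - z₀.re, by linarith, fun z hz => ?_⟩
        by_cases hzim : z.im = 0
        · right
          have h1 : |z.re - z₀.re| ≤ dist z z₀ := by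
            rw [Complex.dist_eq]
            simpa using Complex.abs_re_le_norm (z - z₀)
          have := abs_lt.mp (lt_of_le_of_lt h1 hz)
          linarith [this.2]
        · exact Or.inl hzim
    · refine ⟨|z₀.im|, abs_pos.mpr him, fun z hz => ?_⟩
      left
      intro hzim
      have h1 : |z.im - z₀.im| ≤ dist z z₀ := by
        rw [Complex.dist_eq]
        simpa using Complex.abs_im_le_norm (z - z₀)
      rw [hzim, zero_sub, abs_neg] at h1
      exact absurd (lt_of_le_of_lt h1 hz) (lt_irrefl _)
  set ε : ℝ := min (d / 2) e₀ with hε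
  have hε0 : 0 < ε := lt_min (by linarith) he₀
  -- lower bound on |1 - z t| for z in the ball
  have hlow : ∀ z ∈ Metric.ball z₀ ε, ∀ t ∈ Set.Icc (0:ℝ) 1,
      d / 2 ≤ ‖1 - z * t‖ := by
    intro z hz t ht
    have h1 : ‖1 - z₀ * t‖ - ‖(z - z₀) * t‖ ≤ ‖1 - z * t‖ := by
      have h := norm_sub_norm_le (1 - z₀ * (t:ℂ)) ((z - z₀) * t)
      have e : (1 - z₀ * (t:ℂ)) - (z - z₀) * t = 1 - z * t := by ring
      rw [e] at h
      simpa using h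
    have h2 : ‖(z - z₀) * t‖ ≤ ε * 1 := by
      rw [norm_mul]
      apply mul_le_mul
      · rw [← Complex.dist_eq]; exact (Metric.mem_ball.mp hz).le
      · rw [Complex.norm_real, Real.norm_eq_abs]; rw [_root_.abs_of_nonneg ht.1]; exact ht.2
      · exact norm_nonneg _
      · linarith [hε0]
    have h3 : d ≤ ‖1 - z₀ * t‖ := hmin t ht
    have h4 : ε ≤ d / 2 := min_le_left _ _
    linarith
  have key := intervalIntegral.hasDerivAt_integral_of_dominated_loc_of_deriv_le
    (F := fun z (t : ℝ) => Complex.log (1 - z * t) / t)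
    (F' := fun z (t : ℝ) => -(1 - z * t)⁻¹)
    (bound := fun _ : ℝ => 2 / d)
    (a := (0:ℝ)) (b := 1) (x₀ := z₀) (s := Metric.ball z₀ ε) (Metric.ball_mem_nhds z₀ hε0)
    (Filter.Eventually.of_forall fun z => li2_meas z _)
    (li2_integrable z₀)
    (by
      apply Measurable.aestronglyMeasurable
      exact ((measurable_const.sub (by fun_prop)).inv).neg)
    ?_ (intervalIntegrable_const) ?_
  · obtain ⟨-, hder⟩ := key
    have : Li2 = fun z => -∫ t in (0:ℝ)..1, Complex.log (1 - z * t) / t := rfl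
    rw [this]
    have h2 := hder.neg
    rw [← intervalIntegral.integral_neg] at h2
    exact h2.congr_deriv (by simp)
  · refine ae_of_all _ fun t ht z hz => ?_
    rw [uIoc_of_le zero_le_one] at ht
    have hle := hlow z hz t (Ioc_subset_Icc_self ht)
    show ‖-(1 - z * (t:ℂ))⁻¹‖ ≤ 2 / d
    rw [norm_neg, norm_inv]
    have h0 : (0:ℝ) < ‖1 - z * t‖ := lt_of_lt_of_le (by linarith) hle
    rw [inv_eq_one_div, div_le_div_iff₀ h0 hd0]
    linarith
  · refine ae_of_all _ fun t ht z hz => ?_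
    rw [uIoc_of_le zero_le_one] at ht
    have hQz : z.im ≠ 0 ∨ z.re < 1 := heQ z (lt_of_lt_of_le (Metric.mem_ball.mp hz) (min_le_right _ _))
    have hslit : (1 - z * t) ∈ Complex.slitPlane := slit_aux hQz (Ioc_subset_Icc_self ht)
    have ht0 : (t : ℂ) ≠ 0 := by exact_mod_cast ne_of_gt ht.1
    have hinner : HasDerivAt (fun w : ℂ => 1 - w * (t:ℂ)) (-(t:ℂ)) z := by
      simpa using (HasDerivAt.const_sub 1 ((hasDerivAt_id z).mul_const (t:ℂ)))
    have hlog := (Complex.hasDerivAt_log hslit).comp z hinner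
    have := hlog.div_const (t : ℂ)
    refine this.congr_deriv ?_
    rw [mul_div_assoc, neg_div, div_self ht0]
    ring

lemma integral_inv_one_sub_mul {z : ℂ} (hQ : z.im ≠ 0 ∨ z.re < 1) (hz0 : z ≠ 0) :
    ∫ t in (0:ℝ)..1, (1 - z * t)⁻¹ = -Complex.log (1 - z) / z := by
  have hderiv : ∀ t ∈ uIcc (0:ℝ) 1, HasDerivAt (fun s : ℝ => -Complex.log (1 - z * s) / z)
      ((1 - z * t)⁻¹) t := by
    intro t ht
    rw [uIcc_of_le zero_le_one] at ht
    have hslit := slit_aux hQ ht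
    have hinner : HasDerivAt (fun w : ℂ => 1 - z * w) (-z) ((t:ℝ) : ℂ) := by
      simpa using (HasDerivAt.const_sub 1 ((hasDerivAt_id ((t:ℝ):ℂ)).const_mul z))
    have hlog := (Complex.hasDerivAt_log hslit).comp ((t:ℝ):ℂ) hinner
    have h2 := (hlog.neg.div_const z).comp_ofReal
    have hne := slit_ne hQ ht
    convert h2 using 1
    · funext s; simp [Function.comp_def, neg_div]
    · field_simp
  have hcont : ContinuousOn (fun t : ℝ => (1 - z * t)⁻¹) (uIcc (0:ℝ) 1) := by
    apply ContinuousOn.inv₀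
    · fun_prop
    · intro t ht
      rw [uIcc_of_le zero_le_one] at ht
      exact slit_ne hQ ht
  have := intervalIntegral.integral_eq_sub_of_hasDerivAt hderiv
    (hcont.intervalIntegrable)
  rw [this]
  simp [Complex.log_one]

lemma li2_deriv {z : ℂ} (hQ : z.im ≠ 0 ∨ z.re < 1) (hz0 : z ≠ 0) :
    HasDerivAt Li2 (-Complex.log (1 - z) / z) z := by
  rw [← integral_inv_one_sub_mul hQ hz0]
  exact li2_hasDerivAt hQ

lemma refl_deriv {z : ℂ} (h : z.im ≠ 0 ∨ z = 1/2) :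
    HasDerivAt (fun w => Li2 w + Li2 (1 - w) + Complex.log w * Complex.log (1 - w)) 0 z := by
  have hz0 : z ≠ 0 := by
    rcases h with h | h
    · intro he; rw [he] at h; simp at h
    · rw [h]; norm_num
  have hz1 : (1 : ℂ) - z ≠ 0 := by
    rcases h with h | h
    · intro he
      have : z = 1 := by rwa [sub_eq_zero, eq_comm] at he
      rw [this] at h; simp at h
    · rw [h]; norm_num
  have hQ : z.im ≠ 0 ∨ z.re < 1 := by
    rcases h with h | h
    · exact Or.inl h
    · right; rw [h]; norm_num
  have hQ' : (1 - z).im ≠ 0 ∨ (1 - z).re < 1 := by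
    rcases h with h | h
    · left; simpa using h
    · right; rw [h]; norm_num
  have hzslit : z ∈ Complex.slitPlane := by
    rcases h with h | h
    · exact Complex.mem_slitPlane_iff.mpr (Or.inr h)
    · rw [h]; exact Complex.mem_slitPlane_iff.mpr (Or.inl (by norm_num))
  have h1slit : (1 - z) ∈ Complex.slitPlane := by
    rcases h with h | h
    · exact Complex.mem_slitPlane_iff.mpr (Or.inr (by simpa using h))
    · rw [h]; exact Complex.mem_slitPlane_iff.mpr (Or.inl (by norm_num))
  have hinner : HasDerivAt (fun w : ℂ => 1 - w) (-1) z := by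
    simpa using (HasDerivAt.const_sub 1 (hasDerivAt_id z))
  have h1 : HasDerivAt Li2 (-Complex.log (1 - z) / z) z := li2_deriv hQ hz0
  have h2 : HasDerivAt (fun w => Li2 (1 - w)) (Complex.log z / (1 - z)) z := by
    have hz1' : (1 : ℂ) - (1 - z) = z := by ring
    have hd := (li2_deriv hQ' hz1).comp z hinner
    refine hd.congr_deriv ?_
    rw [hz1']
    field_simp
  have h3 : HasDerivAt (fun w => Complex.log w * Complex.log (1 - w))
      (z⁻¹ * Complex.log (1 - z) + Complex.log z * ((1 - z)⁻¹ * (-1))) z := by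
    exact (Complex.hasDerivAt_log hzslit).mul ((Complex.hasDerivAt_log h1slit).comp z hinner)
  have hsum := (h1.add h2).add h3
  refine hsum.congr_deriv ?_
  field_simp
  ring

lemma arg_add_mem {z : ℂ} (hz : z.im ≠ 0) :
    Complex.arg (1 - z) + Complex.arg (1 + z) ∈ Set.Ioc (-Real.pi) Real.pi := by
  rcases lt_or_gt_of_ne hz with h | h
  · -- im z < 0 : arg(1-z) ∈ (0, π], arg(1+z) ∈ (-π, 0)
    have h1 : 0 ≤ Complex.arg (1 - z) := Complex.arg_nonneg_iff.mpr (by simpa using h.le)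
    have h2 : Complex.arg (1 + z) < 0 := Complex.arg_neg_iff.mpr (by simpa using h)
    constructor
    · have := Complex.neg_pi_lt_arg (1 + z)
      linarith
    · have := Complex.arg_le_pi (1 - z)
      linarith
  · have h1 : Complex.arg (1 - z) < 0 := Complex.arg_neg_iff.mpr (by simpa using h)
    have h2 : 0 ≤ Complex.arg (1 + z) := Complex.arg_nonneg_iff.mpr (by simpa using h.le)
    constructor
    · have := Complex.neg_pi_lt_arg (1 - z)
      linarith
    · have := Complex.arg_le_pi (1 + z)
      linarith

lemma log_one_sub_sq {z : ℂ} (hz : z.im ≠ 0) :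
    Complex.log (1 - z^2) = Complex.log (1 - z) + Complex.log (1 + z) := by
  have h1 : (1:ℂ) - z ≠ 0 := by
    intro he; apply hz
    have : z = 1 := by rwa [sub_eq_zero, eq_comm] at he
    rw [this]; rfl
  have h2 : (1:ℂ) + z ≠ 0 := by
    intro he; apply hz
    have : z = -1 := by linear_combination he
    rw [this]; simp
  have hfac : (1:ℂ) - z^2 = (1 - z) * (1 + z) := by ring
  rw [hfac]
  exact (Complex.log_mul_eq_add_log_iff h1 h2).mpr (arg_add_mem hz)

lemma sq_Q {z : ℂ} (hz : z.im ≠ 0) : (z^2).im ≠ 0 ∨ (z^2).re < 1 := by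
  by_cases hre : z.re = 0
  · right
    rw [show z^2 = z*z by ring]
    rw [Complex.mul_re, hre]
    nlinarith [sq_nonneg z.im, mul_self_pos.mpr hz]
  · left
    rw [show z^2 = z*z by ring, Complex.mul_im]
    intro h
    rcases mul_eq_zero.mp (by linarith : (2:ℝ) * (z.re * z.im) = 0) with h' | h'
    · norm_num at h'
    · rcases mul_eq_zero.mp h' with h'' | h''
      · exact hre h''
      · exact hz h''

lemma dup_deriv {z : ℂ} (h : z.im ≠ 0 ∨ z = 0) :
    HasDerivAt (fun w => Li2 w + Li2 (-w) - Li2 (w^2) / 2) 0 z := by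
  rcases h with hz | hz
  on_goal 1 =>
   have hneg : HasDerivAt (fun w : ℂ => -w) (-1) z := (hasDerivAt_id z).neg
   have hsq : HasDerivAt (fun w : ℂ => w^2) (2*z) z := by
    simpa using (hasDerivAt_pow 2 z)
  · have hz0 : z ≠ 0 := fun he => hz (by rw [he]; rfl)
    have hQ : z.im ≠ 0 ∨ z.re < 1 := Or.inl hz
    have hQn : (-z).im ≠ 0 ∨ (-z).re < 1 := Or.inl (by simpa using hz)
    have hQ2 := sq_Q hz
    have hz20 : z^2 ≠ 0 := pow_ne_zero 2 hz0
    have h1 := li2_deriv hQ hz0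
    have h2 := (li2_deriv hQn (neg_ne_zero.mpr hz0)).comp z hneg
    have h3 := ((li2_deriv hQ2 hz20).comp z hsq).div_const 2
    have hsum := (h1.add h2).sub h3
    have hlog := log_one_sub_sq hz
    refine hsum.congr_deriv ?_
    rw [show (1:ℂ) - -z = 1 + z by ring, hlog]
    field_simp
    ring
  · subst hz
    have hQ0 : (0:ℂ).im ≠ 0 ∨ (0:ℂ).re < 1 := Or.inr (by norm_num)
    have hbase := li2_hasDerivAt hQ0
    have hneg : HasDerivAt (fun w : ℂ => -w) (-1) 0 := (hasDerivAt_id 0).neg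
    have hsq : HasDerivAt (fun w : ℂ => w^2) (2*0) 0 := by
      simpa using (hasDerivAt_pow 2 (0:ℂ))
    have hb1 : HasDerivAt Li2 (∫ t in (0:ℝ)..1, ((1:ℂ) - 0 * t)⁻¹) (-0) := by
      rw [neg_zero]; exact hbase
    have hb2 : HasDerivAt Li2 (∫ t in (0:ℝ)..1, ((1:ℂ) - 0 * t)⁻¹) ((0:ℂ)^2) := by
      rw [show ((0:ℂ)^2) = 0 by norm_num]; exact hbase
    have h2 := hb1.comp (0:ℂ) hneg
    have h3 := (hb2.comp (0:ℂ) hsq).div_const 2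
    have hsum := (hbase.add h2).sub h3
    refine hsum.congr_deriv ?_
    ring

lemma seg_const {g : ℂ → ℂ} {z c : ℂ}
    (hd : ∀ s : ℝ, s ∈ Set.Icc (0:ℝ) 1 → HasDerivAt g 0 (c + s * (z - c))) :
    g z = g c := by
  have key : ∀ s ∈ uIcc (0:ℝ) 1, HasDerivAt (fun s : ℝ => g (c + s * (z - c))) 0 s := by
    intro s hs
    rw [uIcc_of_le zero_le_one] at hs
    have h0 : HasDerivAt (fun y : ℝ => ((y:ℂ))) 1 s := (hasDerivAt_id ((s:ℝ):ℂ)).comp_ofReal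
    have hγ : HasDerivAt (fun y : ℝ => c + (y:ℂ) * (z - c)) (z - c) s := by
      simpa using (h0.mul_const (z - c)).const_add c
    have := (hd s hs).scomp s hγ
    simpa [Function.comp_def] using this
  have h2 := intervalIntegral.integral_eq_sub_of_hasDerivAt key
    (intervalIntegrable_const)
  have e1 : c + ((1:ℝ):ℂ) * (z - c) = z := by push_cast; ring
  have e0 : c + ((0:ℝ):ℂ) * (z - c) = c := by push_cast; ring
  rw [e1, e0] at h2
  simp at h2
  linear_combination -h2

lemma Li2_zero : Li2 0 = 0 := by
  simp [Li2]

lemma refl_eq {z : ℂ} (hz : z.im ≠ 0) :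
    Li2 z + Li2 (1 - z) + Complex.log z * Complex.log (1 - z) =
      Li2 (1/2) + Li2 (1/2) + Complex.log (1/2) * Complex.log (1/2) := by
  have h := seg_const (g := fun w => Li2 w + Li2 (1 - w) + Complex.log w * Complex.log (1 - w))
    (z := z) (c := 1/2) ?_
  · rw [h]
    norm_num
  · intro s hs
    apply refl_deriv
    rcases eq_or_lt_of_le hs.1 with h0 | h0
    · right
      rw [← h0]
      push_cast
      ring
    · left
      have : ((1:ℂ)/2 + (s:ℂ) * (z - 1/2)).im = s * z.im := by
        simp [Complex.add_im, Complex.mul_im, Complex.div_im]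
      rw [this]
      exact mul_ne_zero (ne_of_gt h0) hz

lemma dup_eq {z : ℂ} (hz : z.im ≠ 0) :
    Li2 z + Li2 (-z) - Li2 (z^2) / 2 = 0 := by
  have h := seg_const (g := fun w => Li2 w + Li2 (-w) - Li2 (w^2) / 2)
    (z := z) (c := 0) ?_
  · rw [h]
    simp [Li2_zero]
  · intro s hs
    apply dup_deriv
    rcases eq_or_lt_of_le hs.1 with h0 | h0
    · right
      rw [← h0]
      push_cast
      ring
    · left
      have : ((0:ℂ) + (s:ℂ) * (z - 0)).im = s * z.im := by
        simp [Complex.add_im, Complex.mul_im]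
      rw [this]
      exact mul_ne_zero (ne_of_gt h0) hz

lemma intervalIntegrable_im {f : ℝ → ℂ} {a b : ℝ} (hf : IntervalIntegrable f volume a b) :
    IntervalIntegrable (fun t => (f t).im) volume a b :=
  ⟨hf.1.im, hf.2.im⟩

lemma interval_im {f : ℝ → ℂ} (hf : IntervalIntegrable f volume 0 1) :
    (∫ t in (0:ℝ)..1, f t).im = ∫ t in (0:ℝ)..1, (f t).im := by
  rw [intervalIntegral.integral_of_le zero_le_one, intervalIntegral.integral_of_le zero_le_one]
  have := ContinuousLinearMap.integral_comp_comm Complex.imCLM hf.1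
  simpa using this.symm

lemma im_integrand_eq_zero {x t : ℝ} (h : 0 ≤ 1 - x * t) :
    (Complex.log (1 - (x:ℂ) * t) / (t:ℂ)).im = 0 := by
  have e : (1:ℂ) - (x:ℂ) * t = ((1 - x * t : ℝ) : ℂ) := by push_cast; ring
  rw [e, ← Complex.ofReal_log h, ← Complex.ofReal_div]
  exact Complex.ofReal_im _

lemma xt_le_one {x t : ℝ} (hx : x ≤ 1) (ht : t ∈ Icc (0:ℝ) 1) : x * t ≤ 1 := by
  rcases le_total x 0 with h | h
  · nlinarith [ht.1, ht.2]
  · nlinarith [ht.1, ht.2]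

lemma im_li2_of_le {x : ℝ} (hx : x ≤ 1) : (Li2 (x:ℂ)).im = 0 := by
  have h1 : (Li2 (x:ℂ)).im = -(∫ t in (0:ℝ)..1, Complex.log (1 - (x:ℂ) * t) / t).im := by
    rw [Li2]; exact Complex.neg_im _
  rw [h1, interval_im (li2_integrable _)]
  have h2 : ∫ t in (0:ℝ)..1, (Complex.log (1 - (x:ℂ) * t) / (t:ℂ)).im = 0 := by
    apply intervalIntegral.integral_zero_ae
    refine ae_of_all _ fun t ht => ?_
    rw [uIoc_of_le zero_le_one] at ht
    exact im_integrand_eq_zero (by linarith [xt_le_one hx (Ioc_subset_Icc_self ht)])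
  rw [h2]
  simp

lemma im_li2_of_gt {x : ℝ} (hx : 1 < x) : (Li2 (x:ℂ)).im = -(Real.pi * Real.log x) := by
  have hx0 : (0:ℝ) < x := by linarith
  have hr0 : 0 < x⁻¹ := by positivity
  have hr1 : x⁻¹ < 1 := by
    nlinarith [mul_pos (sub_pos.mpr hx) hr0, mul_inv_cancel₀ (ne_of_gt hx0)]
  have hint := intervalIntegrable_im (li2_integrable ((x:ℝ):ℂ))
  have hint1 : IntervalIntegrable (fun t => (Complex.log (1 - (x:ℂ) * t) / (t:ℂ)).im) volume 0 x⁻¹ :=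
    hint.mono_set (by rw [uIcc_of_le zero_le_one, uIcc_of_le hr0.le]
                      exact Icc_subset_Icc le_rfl hr1.le)
  have hint2 : IntervalIntegrable (fun t => (Complex.log (1 - (x:ℂ) * t) / (t:ℂ)).im) volume x⁻¹ 1 :=
    hint.mono_set (by rw [uIcc_of_le zero_le_one, uIcc_of_le (by linarith : x⁻¹ ≤ (1:ℝ))]
                      exact Icc_subset_Icc hr0.le le_rfl)
  have h1 : (Li2 (x:ℂ)).im = -(∫ t in (0:ℝ)..1, Complex.log (1 - (x:ℂ) * t) / t).im := by
    rw [Li2]; exact Complex.neg_im _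
  rw [h1, interval_im (li2_integrable _)]
  rw [← intervalIntegral.integral_add_adjacent_intervals hint1 hint2]
  have e1 : ∫ t in (0:ℝ)..x⁻¹, (Complex.log (1 - (x:ℂ) * t) / (t:ℂ)).im = 0 := by
    apply intervalIntegral.integral_zero_ae
    refine ae_of_all _ fun t ht => ?_
    rw [uIoc_of_le hr0.le] at ht
    apply im_integrand_eq_zero
    have : x * t ≤ x * x⁻¹ := by nlinarith [ht.1, ht.2]
    rw [mul_inv_cancel₀ (ne_of_gt hx0)] at this
    linarith
  have e2 : ∫ t in x⁻¹..1, (Complex.log (1 - (x:ℂ) * t) / (t:ℂ)).im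
      = ∫ t in x⁻¹..1, Real.pi * (1 / t) := by
    apply intervalIntegral.integral_congr_ae
    refine ae_of_all _ fun t ht => ?_
    rw [uIoc_of_le hr1.le] at ht
    have ht0 : 0 < t := lt_trans hr0 ht.1
    have hneg : 1 - x * t < 0 := by
      have : x * x⁻¹ < x * t := by nlinarith [ht.1]
      rw [mul_inv_cancel₀ (ne_of_gt hx0)] at this
      linarith
    have e : (1:ℂ) - (x:ℂ) * t = ((1 - x * t : ℝ) : ℂ) := by push_cast; ring
    rw [e]
    rw [div_eq_mul_inv, ← Complex.ofReal_inv, Complex.mul_im]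
    simp only [Complex.ofReal_re, Complex.ofReal_im, mul_zero, zero_add, add_zero]
    rw [Complex.log_im, Complex.arg_ofReal_of_neg hneg]
    ring
  rw [e1, e2, intervalIntegral.integral_const_mul, integral_one_div (by
    rw [uIcc_of_le hr1.le]
    intro h
    exact absurd h.1 (not_le.mpr hr0))]
  have hlog1 : Real.log (1 / x⁻¹) = Real.log x := by
    rw [one_div, inv_inv]
  rw [hlog1]
  ring

lemma D2_real (x : ℝ) : D2 (x:ℂ) = 0 := by
  rcases le_or_gt x 1 with hx | hx
  · rw [D2, im_li2_of_le hx]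
    have e : (1:ℂ) - (x:ℂ) = ((1 - x : ℝ) : ℂ) := by push_cast; ring
    rw [e, Complex.arg_ofReal_of_nonneg (by linarith)]
    simp
  · rw [D2, im_li2_of_gt hx]
    have e : (1:ℂ) - (x:ℂ) = ((1 - x : ℝ) : ℂ) := by push_cast; ring
    rw [e, Complex.arg_ofReal_of_neg (by linarith)]
    rw [Complex.norm_real, Real.norm_eq_abs, abs_of_pos (by linarith : (0:ℝ) < x)]
    ring

lemma one_sub_ne {z : ℂ} (hz : z.im ≠ 0) : (1:ℂ) - z ≠ 0 := by
  intro he; apply hz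
  have : z = 1 := by rwa [sub_eq_zero, eq_comm] at he
  rw [this]; simp

lemma one_add_ne {z : ℂ} (hz : z.im ≠ 0) : (1:ℂ) + z ≠ 0 := by
  intro he; apply hz
  have : z = -1 := by linear_combination he
  rw [this]; simp

lemma arg_one_sub_sq {z : ℂ} (hz : z.im ≠ 0) :
    Complex.arg (1 - z^2) = Complex.arg (1 - z) + Complex.arg (1 + z) := by
  have hfac : (1:ℂ) - z^2 = (1 - z) * (1 + z) := by ring
  rw [hfac]
  exact Complex.arg_mul (one_sub_ne hz) (one_add_ne hz) (arg_add_mem hz)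

lemma refl_im {z : ℂ} (hz : z.im ≠ 0) :
    (Li2 z).im + (Li2 (1 - z)).im + (Complex.log z * Complex.log (1 - z)).im = 0 := by
  have h := congrArg Complex.im (refl_eq hz)
  simp only [Complex.add_im] at h
  rw [h]
  have hhalf : ((1:ℂ)/2) = ((1/2 : ℝ) : ℂ) := by push_cast; ring
  have h1 : (Li2 ((1:ℂ)/2)).im = 0 := by rw [hhalf]; exact im_li2_of_le (by norm_num)
  have h2 : (Complex.log ((1:ℂ)/2) * Complex.log ((1:ℂ)/2)).im = 0 := by
    rw [hhalf, ← Complex.ofReal_log (by norm_num : (0:ℝ) ≤ 1/2), ← Complex.ofReal_mul]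
    exact Complex.ofReal_im _
  rw [h1, h2]
  ring

lemma D2_refl {z : ℂ} (hz : z.im ≠ 0) : D2 z + D2 (1 - z) = 0 := by
  have hz' : ((1:ℂ) - z).im ≠ 0 := by simpa using hz
  have h := refl_im hz
  have hmul : (Complex.log z * Complex.log (1 - z)).im =
      Real.log (‖z‖) * Complex.arg (1 - z)
        + Complex.arg z * Real.log (‖1 - z‖) := by
    rw [Complex.mul_im, Complex.log_re, Complex.log_im, Complex.log_re, Complex.log_im]
  rw [D2, D2]
  rw [show (1:ℂ) - (1 - z) = z by ring]
  rw [hmul] at h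
  linarith [h]

lemma dup_im {z : ℂ} (hz : z.im ≠ 0) :
    (Li2 z).im + (Li2 (-z)).im = (Li2 (z^2)).im / 2 := by
  have h := congrArg Complex.im (dup_eq hz)
  simp only [Complex.sub_im, Complex.add_im, Complex.zero_im, Complex.div_im] at h
  have h' := congrArg Complex.im (dup_eq hz)
  have : (Li2 z + Li2 (-z) - Li2 (z^2) / 2).im
      = (Li2 z).im + (Li2 (-z)).im - (Li2 (z^2)).im / 2 := by
    rw [Complex.sub_im, Complex.add_im]
    congr 1
    rw [show (Li2 (z^2) / 2 : ℂ) = Li2 (z^2) * (((1:ℝ)/2 : ℝ) : ℂ) by push_cast; ring]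
    rw [Complex.mul_im]
    simp
    ring
  rw [this] at h'
  rw [show (0:ℂ).im = 0 from rfl] at h'
  linarith [h']

lemma D2_dup {z : ℂ} (hz : z.im ≠ 0) : D2 z + D2 (-z) = D2 (z^2) / 2 := by
  rw [D2, D2, D2]
  rw [show (1:ℂ) - -z = 1 + z by ring]
  have habs : ‖-z‖ = ‖z‖ := norm_neg _
  have habs2 : Real.log (‖z^2‖) = 2 * Real.log (‖z‖) := by
    rw [norm_pow, Real.log_pow]
    push_cast; ring
  rw [habs, habs2, arg_one_sub_sq hz]
  have := dup_im hz
  linarith [this]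

/-- For `t ∉ {-2, -1, 0, 1}`, `2·D₂(t) + D₂(1 - t²) = -2·D₂(-t)`. -/
theorem D2_triangle_identity (t : ℂ)
    (h2 : t ≠ -2) (h1' : t ≠ -1) (h0 : t ≠ 0) (h1 : t ≠ 1) :
    2 * D2 t + D2 (1 - t ^ 2) = -2 * D2 (-t) := by
  by_cases him : t.im = 0
  · have ht : t = ((t.re : ℝ) : ℂ) := Complex.ext rfl (by simp [him])
    have e1 : D2 t = 0 := by rw [ht]; exact D2_real _
    have e2 : D2 (-t) = 0 := by
      rw [ht, ← Complex.ofReal_neg]; exact D2_real _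
    have e3 : D2 (1 - t^2) = 0 := by
      rw [ht]
      rw [show (1:ℂ) - ((t.re:ℝ):ℂ)^2 = ((1 - t.re^2 : ℝ) : ℂ) by push_cast; ring]
      exact D2_real _
    rw [e1, e2, e3]; ring
  · have hA : D2 t + D2 (-t) = D2 (t^2) / 2 := D2_dup him
    have hB : D2 (t^2) + D2 (1 - t^2) = 0 := by
      by_cases h2im : (t^2).im = 0
      · have ht2 : t^2 = (((t^2).re : ℝ) : ℂ) := Complex.ext rfl (by simp [h2im])
        have f1 : D2 (t^2) = 0 := by rw [ht2]; exact D2_real _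
        have f2 : D2 (1 - t^2) = 0 := by
          rw [ht2]
          rw [show (1:ℂ) - (((t^2).re:ℝ):ℂ) = ((1 - (t^2).re : ℝ) : ℂ) by push_cast; ring]
          exact D2_real _
        rw [f1, f2]; ring
      · exact D2_refl h2im
    linarith [hA, hB]
end
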